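/- arXiv:2010.10991 — 5 statements merged into one kernel-verified Lean document; each statement's English description precedes it below -/
import Mathlib

section
/- For every signed graph Γ = ((V,E), σ), the smallest Laplacian eigenvalue is bounded above by the frustration number, which in turn is bounded above by the frustration index: λ₁(Γ) ≤ ν(Γ) ≤ ε(Γ). -/
open Matrix Finset

attribute [local instance 10] Classical.propDecidable

variable {V : Type*}

/-- The signed Laplacian of a signed graph `(G, σ)`: diagonal entries are vertex degrees,
and for `i ≠ j` the entry is `-σ i j` if `(i,j)` is an edge and `0` otherwise. -/
noncomputable def signedLaplacian [Fintype V] [DecidableEq V] (G : SimpleGraph V)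
    (σ : V → V → ℝ) : Matrix V V ℝ :=
  Matrix.of fun i j =>
    if i = j then (G.degree i : ℝ) else if G.Adj i j then -σ i j else 0

/-- A signed graph is balanced if the vertices can be partitioned into `S` and `Sᶜ` so that
edges inside a part are positive and edges across parts are negative. -/
def IsBalanced (G : SimpleGraph V) (σ : V → V → ℝ) : Prop :=
  ∃ S : Set V, ∀ i j, G.Adj i j → (σ i j = 1 ↔ (i ∈ S ↔ j ∈ S))

/-- The induced (signed) subgraph on vertex set `W` is balanced. -/
def IsBalancedOn (G : SimpleGraph V) (σ : V → V → ℝ) (W : Set V) : Prop :=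
  ∃ S : Set V, ∀ i ∈ W, ∀ j ∈ W, G.Adj i j → (σ i j = 1 ↔ (i ∈ S ↔ j ∈ S))

/-- Current balance `Δ`: the maximum number of vertices of an induced subgraph that is
connected and balanced. -/
noncomputable def currentBalance [Fintype V] (G : SimpleGraph V) (σ : V → V → ℝ) : ℕ :=
  sSup {k : ℕ | ∃ W : Set V, W.ncard = k ∧ (G.induce W).Connected ∧ IsBalancedOn G σ W}

/-- Frustration number `ν`: minimum number of vertices whose deletion leaves a balanced graph. -/
noncomputable def frustrationNumber [Fintype V] (G : SimpleGraph V) (σ : V → V → ℝ) : ℕ :=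
  sInf {k : ℕ | ∃ D : Set V, D.ncard = k ∧ IsBalancedOn G σ Dᶜ}

/-- Frustration index `ε`: minimum number of edges whose deletion leaves a balanced graph. -/
noncomputable def frustrationIndex [Fintype V] (G : SimpleGraph V) (σ : V → V → ℝ) : ℕ :=
  sInf {k : ℕ | ∃ X : Set (Sym2 V), X ⊆ G.edgeSet ∧ X.ncard = k ∧
    IsBalanced (G.deleteEdges X) σ}

/-- The smallest eigenvalue of a Hermitian (real symmetric) matrix. -/
noncomputable def smallestEigenvalue [Fintype V] [DecidableEq V] {A : Matrix V V ℝ}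
    (hA : A.IsHermitian) : ℝ :=
  ⨅ i, hA.eigenvalues i

/-- The function on unordered edges `{i, j} ↦ (v i - σ i j * v j)^2`. -/
noncomputable def edgeWeight (σ : V → V → ℝ) (hsym : ∀ i j, σ i j = σ j i)
    (hsign : ∀ i j, σ i j = 1 ∨ σ i j = -1) (v : V → ℝ) : Sym2 V → ℝ :=
  Sym2.lift ⟨fun i j => (v i - σ i j * v j) ^ 2, fun a b => by
    show (v a - σ a b * v b) ^ 2 = (v b - σ b a * v a) ^ 2
    rw [hsym b a]
    rcases hsign a b with h | h <;> rw [h] <;> ring⟩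

/-!
If deleting a vertex set `D` leaves a balanced graph with switching function `ζ = ±1`, take
the test vector `x = ζ` off `D` and `x = 0` on `D`. Balance makes every edge inside `Dᶜ`
contribute nothing to `xᵀ L x`, so `xᵀ L x` counts the edges between `Dᶜ` and `D`, at most
`|Dᶜ| |D|`, while `xᵀ x = |Dᶜ|`; the Rayleigh bound gives `λ₁ ≤ |D|`. For a minimal `D`, `Dᶜ`
is nonempty because deleting all but one vertex already balances the graph. For `ν ≤ ε`,
deleting one endpoint of every edge of a balancing edge set balances the graph.
-/

lemma smallestEigenvalue_mul_dotProduct_self_le [Fintype V] [DecidableEq V] {A : Matrix V V ℝ}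
    (hA : A.IsHermitian) (v : V → ℝ) :
    smallestEigenvalue hA * (v ⬝ᵥ v) ≤ v ⬝ᵥ (A *ᵥ v) := by
  have hpsd : (A - algebraMap ℝ _ (smallestEigenvalue hA)).PosSemidef := by
    rw [posSemidef_iff_isHermitian_and_spectrum_nonneg, ← spectrum.sub_singleton_eq,
      hA.spectrum_real_eq_range_eigenvalues]
    refine ⟨hA.sub (isHermitian_diagonal _), ?_⟩
    rintro _ ⟨_, ⟨i, rfl⟩, _, rfl, rfl⟩
    exact sub_nonneg.2 (ciInf_le (Set.finite_range hA.eigenvalues).bddBelow i)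
  simpa [Algebra.algebraMap_eq_smul_one, sub_mulVec, dotProduct_sub, smul_mulVec,
    dotProduct_smul] using hpsd.re_dotProduct_nonneg v

lemma Set.sum_indicator_const [Fintype V] {R : Type*} [NonAssocSemiring R] (s : Set V)
    (c : R) :
    ∑ i, s.indicator (fun _ => c) i = s.ncard * c := by
  classical
  simp [Set.indicator_apply, Finset.sum_ite, Set.ncard_eq_toFinset_card']

noncomputable def switchingFunction (S : Set V) (i : V) : ℝ := if i ∈ S then 1 else -1

lemma switchingFunction_mul_self (S : Set V) (i : V) :
    switchingFunction S i * switchingFunction S i = 1 := by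
  unfold switchingFunction; split_ifs <;> norm_num

lemma eq_switchingFunction_mul_of_sign_iff {σ : V → V → ℝ} {S : Set V} {i j : V}
    (hsign : σ i j = 1 ∨ σ i j = -1) (h : σ i j = 1 ↔ (i ∈ S ↔ j ∈ S)) :
    σ i j = switchingFunction S i * switchingFunction S j := by
  unfold switchingFunction
  rcases hsign with hσ | hσ <;> by_cases hi : i ∈ S <;> by_cases hj : j ∈ S <;> simp_all

lemma signedLaplacian_mulVec_apply [Fintype V] [DecidableEq V] (G : SimpleGraph V)
    (σ : V → V → ℝ) (v : V → ℝ) (i : V) :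
    (signedLaplacian G σ *ᵥ v) i = ∑ j ∈ G.neighborFinset i, (v i - σ i j * v j) := by
  have hentry : ∀ j, signedLaplacian G σ i j * v j =
      (if i = j then (G.degree i : ℝ) * v i else 0) + if G.Adj i j then -σ i j * v j else 0 := by
    intro j
    by_cases h : i = j
    · subst h; simp [signedLaplacian]
    · simp [signedLaplacian, h]
  simp [mulVec, dotProduct, hentry, Finset.sum_add_distrib, ← Finset.sum_filter, sub_eq_add_neg,
    ← SimpleGraph.card_neighborFinset_eq_degree, SimpleGraph.neighborFinset_eq_filter]

lemma indicator_mul_signedLaplacian_mulVec_le [Fintype V] [DecidableEq V] {G : SimpleGraph V}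
    {σ : V → V → ℝ} (hsign : ∀ i j, σ i j = 1 ∨ σ i j = -1) {D S : Set V}
    (hS : ∀ i ∈ Dᶜ, ∀ j ∈ Dᶜ, G.Adj i j → (σ i j = 1 ↔ (i ∈ S ↔ j ∈ S))) (i : V) :
    Dᶜ.indicator (switchingFunction S) i *
        (signedLaplacian G σ *ᵥ Dᶜ.indicator (switchingFunction S)) i ≤
      Dᶜ.indicator (fun _ => (D.ncard : ℝ)) i := by
  set v := Dᶜ.indicator (switchingFunction S)
  by_cases hi : i ∈ D
  · simp [v, hi]
  -- balance on `Dᶜ` means `σ i j = ζ i ζ j` there, so only edges into `D` contribute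
  have hterm : ∀ j ∈ G.neighborFinset i, v i * (v i - σ i j * v j) = D.indicator 1 j := by
    intro j hj
    rw [SimpleGraph.mem_neighborFinset] at hj
    by_cases hjD : j ∈ D
    · simp [v, hi, hjD, switchingFunction_mul_self]
    · rw [eq_switchingFunction_mul_of_sign_iff (hsign i j) (hS i hi j hjD hj)]
      simp only [v, Set.indicator_of_mem (Set.mem_compl hi),
        Set.indicator_of_mem (Set.mem_compl hjD), Set.indicator_of_notMem hjD]
      linear_combination -(switchingFunction S i * switchingFunction S i) *
        switchingFunction_mul_self S j
  calc v i * (signedLaplacian G σ *ᵥ v) i = ∑ j ∈ G.neighborFinset i, D.indicator 1 j := by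
        rw [signedLaplacian_mulVec_apply, Finset.mul_sum]; exact Finset.sum_congr rfl hterm
    _ ≤ ∑ j, D.indicator 1 j :=
        Finset.sum_le_sum_of_subset_of_nonneg (Finset.subset_univ _) fun j _ _ =>
          Set.indicator_nonneg (fun _ _ => zero_le_one) j
    _ = Dᶜ.indicator (fun _ => (D.ncard : ℝ)) i := by
        rw [Set.indicator_of_mem (Set.mem_compl hi), ← mul_one (D.ncard : ℝ),
          ← Set.sum_indicator_const]
        rfl

lemma smallestEigenvalue_le_ncard_of_isBalancedOn_compl [Fintype V] [DecidableEq V]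
    {G : SimpleGraph V} {σ : V → V → ℝ} (hsign : ∀ i j, σ i j = 1 ∨ σ i j = -1)
    (hL : (signedLaplacian G σ).IsHermitian) {D : Set V} (hD : IsBalancedOn G σ Dᶜ)
    (hne : Dᶜ.Nonempty) : smallestEigenvalue hL ≤ D.ncard := by
  obtain ⟨S, hS⟩ := hD
  set v := Dᶜ.indicator (switchingFunction S)
  have hvv : v ⬝ᵥ v = Dᶜ.ncard := by
    have hsq : ∀ i, v i * v i = Dᶜ.indicator (fun _ => (1 : ℝ)) i := fun i => by
      by_cases hi : i ∈ Dᶜ <;> simp [v, hi, switchingFunction_mul_self]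
    simp only [dotProduct, hsq, Set.sum_indicator_const, mul_one]
  have hvLv : v ⬝ᵥ (signedLaplacian G σ *ᵥ v) ≤ Dᶜ.ncard * D.ncard :=
    calc _ ≤ ∑ i, Dᶜ.indicator (fun _ => (D.ncard : ℝ)) i :=
          Finset.sum_le_sum fun i _ => indicator_mul_signedLaplacian_mulVec_le hsign hS i
      _ = _ := Set.sum_indicator_const _ _
  have hpos : (0 : ℝ) < Dᶜ.ncard := by exact_mod_cast (Set.ncard_pos).2 hne
  have hrayleigh := smallestEigenvalue_mul_dotProduct_self_le hL v
  rw [hvv, mul_comm] at hrayleigh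
  exact le_of_mul_le_mul_left (hrayleigh.trans hvLv) hpos

lemma exists_ncard_eq_frustrationNumber [Fintype V] (G : SimpleGraph V) (σ : V → V → ℝ) :
    ∃ D : Set V, D.ncard = frustrationNumber G σ ∧ IsBalancedOn G σ Dᶜ :=
  Nat.sInf_mem (s := {k | ∃ D : Set V, D.ncard = k ∧ IsBalancedOn G σ Dᶜ})
    ⟨_, Set.univ, rfl, ∅, by simp⟩

lemma frustrationNumber_lt_card [Fintype V] [Nonempty V] (G : SimpleGraph V)
    (σ : V → V → ℝ) : frustrationNumber G σ < Nat.card V := by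
  obtain ⟨i⟩ := ‹Nonempty V›
  have hbal : IsBalancedOn G σ ({i}ᶜ : Set V)ᶜ := ⟨∅, fun j hj k hk hadj => by simp_all⟩
  calc frustrationNumber G σ ≤ ({i}ᶜ : Set V).ncard := Nat.sInf_le ⟨_, rfl, hbal⟩
    _ < Nat.card V := Set.ncard_lt_card fun h => by simpa using congrArg (i ∈ ·) h

lemma isBalancedOn_compl_of_isBalanced_deleteEdges {G : SimpleGraph V} {σ : V → V → ℝ}
    {X : Set (Sym2 V)} {D : Set V} (hX : IsBalanced (G.deleteEdges X) σ)
    (hD : ∀ e ∈ X, ∃ i ∈ e, i ∈ D) : IsBalancedOn G σ Dᶜ := by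
  obtain ⟨S, hS⟩ := hX
  refine ⟨S, fun i hi j hj hadj => hS i j (SimpleGraph.deleteEdges_adj.2 ⟨hadj, fun he => ?_⟩)⟩
  obtain ⟨k, hk, hkD⟩ := hD _ he
  rcases Sym2.mem_iff.1 hk with rfl | rfl
  exacts [hi hkD, hj hkD]

lemma exists_ncard_eq_frustrationIndex [Fintype V] (G : SimpleGraph V) (σ : V → V → ℝ) :
    ∃ X : Set (Sym2 V), X.ncard = frustrationIndex G σ ∧ IsBalanced (G.deleteEdges X) σ := by
  obtain ⟨X, -, hX⟩ : frustrationIndex G σ ∈ {k : ℕ | ∃ X : Set (Sym2 V), X ⊆ G.edgeSet ∧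
      X.ncard = k ∧ IsBalanced (G.deleteEdges X) σ} :=
    Nat.sInf_mem ⟨_, G.edgeSet, subset_rfl, rfl, ∅, by simp⟩
  exact ⟨X, hX⟩

lemma frustrationNumber_le_frustrationIndex [Fintype V] (G : SimpleGraph V)
    (σ : V → V → ℝ) : frustrationNumber G σ ≤ frustrationIndex G σ := by
  obtain ⟨X, hX, hbal⟩ := exists_ncard_eq_frustrationIndex G σ
  calc frustrationNumber G σ ≤ ((fun e : Sym2 V => e.out.1) '' X).ncard :=
        Nat.sInf_le ⟨_, rfl, isBalancedOn_compl_of_isBalanced_deleteEdges hbal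
          fun e he => ⟨e.out.1, Sym2.out_fst_mem e, e, he, rfl⟩⟩
    _ ≤ X.ncard := Set.ncard_image_le X.toFinite
    _ = frustrationIndex G σ := hX

theorem smallestEigenvalue_le_frustrationNumber_le_frustrationIndex_general
    [Fintype V] [DecidableEq V] [Nonempty V]
    (G : SimpleGraph V) (σ : V → V → ℝ)
    (hsign : ∀ i j, σ i j = 1 ∨ σ i j = -1)
    (hL : (signedLaplacian G σ).IsHermitian) :
    smallestEigenvalue hL ≤ (frustrationNumber G σ : ℝ) ∧
      frustrationNumber G σ ≤ frustrationIndex G σ := by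
  obtain ⟨D, hD, hbal⟩ := exists_ncard_eq_frustrationNumber G σ
  have hne : Dᶜ.Nonempty := Set.nonempty_compl.2 fun hD_univ =>
    (frustrationNumber_lt_card G σ).ne (by rw [← hD, hD_univ, Set.ncard_univ])
  exact ⟨hD ▸ smallestEigenvalue_le_ncard_of_isBalancedOn_compl hsign hL hbal hne,
    frustrationNumber_le_frustrationIndex G σ⟩

/-- `λ₁(Γ) ≤ ν(Γ) ≤ ε(Γ)`: the smallest Laplacian eigenvalue is at most
the frustration number, which is at most the frustration index. -/
theorem smallestEigenvalue_le_frustrationNumber_le_frustrationIndex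
    [Fintype V] [DecidableEq V] [Nonempty V]
    (G : SimpleGraph V) (σ : V → V → ℝ)
    (hsym : ∀ i j, σ i j = σ j i)
    (hsign : ∀ i j, σ i j = 1 ∨ σ i j = -1)
    (hL : (signedLaplacian G σ).IsHermitian) :
    smallestEigenvalue hL ≤ (frustrationNumber G σ : ℝ) ∧
      frustrationNumber G σ ≤ frustrationIndex G σ :=
  smallestEigenvalue_le_frustrationNumber_le_frustrationIndex_general G σ hsign hL
end

section
/- The current balance Δ is not monotone under edge deletion. Concretely, let H be the signed path on four vertices a, b, c, d with edges (a,b), (b,c), (c,d), where σ(b,c) = −1 and σ(a,b) = σ(c,d) = +1. Then Δ(H) = 4, while for every edge e of H, Δ(H_{{e}}) ≤ 3 < Δ(H). -/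
open Matrix Finset

attribute [local instance 10] Classical.propDecidable

variable {V : Type*}

private lemma walk_mem' {V : Type*} {G : SimpleGraph V} {C : Set V}
    (hC : ∀ ⦃u v⦄, u ∈ C → G.Adj u v → v ∈ C) :
    ∀ {a b : V}, G.Walk a b → a ∈ C → b ∈ C := by
  intro a b w
  induction w with
  | nil => exact id
  | cons h p ih => exact fun ha => ih (hC ha h)

/-- On the signed path `a − b − c − d` with the middle edge negative and
the other edges positive, `Δ(H) = 4`, while deleting any single edge drops the current
balance to at most `3 < Δ(H)`. -/
theorem currentBalance_not_monotone_path :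
    let G : SimpleGraph (Fin 4) :=
      SimpleGraph.fromEdgeSet {s((0 : Fin 4), (1 : Fin 4)), s((1 : Fin 4), (2 : Fin 4)),
        s((2 : Fin 4), (3 : Fin 4))}
    let σ : Fin 4 → Fin 4 → ℝ := fun a b =>
      if (a = 1 ∧ b = 2) ∨ (a = 2 ∧ b = 1) then -1 else 1
    currentBalance G σ = 4 ∧
      ∀ e ∈ G.edgeSet,
        currentBalance (G.deleteEdges {e}) σ ≤ 3 ∧
        currentBalance (G.deleteEdges {e}) σ < currentBalance G σ := by
  intro G σ
  have hA : ∀ i j : Fin 4, G.Adj i j ↔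
      (i = 0 ∧ j = 1) ∨ (i = 1 ∧ j = 0) ∨ (i = 1 ∧ j = 2) ∨ (i = 2 ∧ j = 1) ∨
      (i = 2 ∧ j = 3) ∨ (i = 3 ∧ j = 2) := by
    intro i j
    fin_cases i <;> fin_cases j <;>
      simp [G, SimpleGraph.fromEdgeSet_adj, Sym2.eq_iff]
  have hbound : ∀ (W : Set (Fin 4)), W.ncard ≤ 4 := fun W => by
    calc W.ncard ≤ (Set.univ : Set (Fin 4)).ncard :=
          Set.ncard_le_ncard (Set.subset_univ W) Set.finite_univ
      _ = 4 := by simp [Set.ncard_univ]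
  have hG4 : currentBalance G σ = 4 := by
    apply le_antisymm
    · apply csSup_le'
      rintro k ⟨W, rfl, -, -⟩
      exact hbound W
    · apply le_csSup
      · exact ⟨4, by rintro k ⟨W, rfl, -, -⟩; exact hbound W⟩
      · refine ⟨Set.univ, by simp [Set.ncard_univ], ?_, ?_⟩
        · rw [(SimpleGraph.induceUnivIso G).connected_iff]
          have h01 : G.Adj 0 1 := by rw [hA]; tauto
          have h12 : G.Adj 1 2 := by rw [hA]; tauto
          have h23 : G.Adj 2 3 := by rw [hA]; tauto
          have r0 : ∀ v : Fin 4, G.Reachable 0 v := by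
            intro v
            fin_cases v
            · exact SimpleGraph.Reachable.refl _
            · exact h01.reachable
            · exact h01.reachable.trans h12.reachable
            · exact (h01.reachable.trans h12.reachable).trans h23.reachable
          exact ⟨fun u v => (r0 u).symm.trans (r0 v)⟩
        · refine ⟨({2, 3} : Set (Fin 4)), ?_⟩
          intro i _ j _ hij
          rw [hA] at hij
          rcases hij with ⟨rfl, rfl⟩ | ⟨rfl, rfl⟩ | ⟨rfl, rfl⟩ | ⟨rfl, rfl⟩ |
            ⟨rfl, rfl⟩ | ⟨rfl, rfl⟩ <;>
            norm_num [σ, Set.mem_insert_iff, Set.mem_singleton_iff] <;> decide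
  refine ⟨hG4, ?_⟩
  intro e he
  have he' : e = s((0 : Fin 4), 1) ∨ e = s((1 : Fin 4), 2) ∨ e = s((2 : Fin 4), 3) := by
    simp only [G, SimpleGraph.edgeSet_fromEdgeSet, Set.mem_diff, Set.mem_insert_iff,
      Set.mem_singleton_iff] at he
    tauto
  have hA' : ∀ i j : Fin 4, (G.deleteEdges {e}).Adj i j ↔ G.Adj i j ∧ s(i, j) ≠ e := by
    intro i j; simp [SimpleGraph.deleteEdges_adj]
  suffices h3 : currentBalance (G.deleteEdges {e}) σ ≤ 3 by
    refine ⟨h3, ?_⟩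
    rw [hG4]; omega
  apply csSup_le'
  rintro k ⟨W, rfl, hconn, -⟩
  by_contra hk
  push_neg at hk
  have hW4 : (Set.univ : Set (Fin 4)).ncard ≤ W.ncard := by
    rw [Set.ncard_univ]; simp; omega
  have hWuniv : W = Set.univ := Set.eq_of_subset_of_ncard_le (Set.subset_univ W) hW4
  rw [hWuniv, (SimpleGraph.induceUnivIso _).connected_iff] at hconn
  rcases he' with rfl | rfl | rfl
  · -- deleting edge (0,1): vertex 0 is isolated
    have hiso : ∀ v : Fin 4, ¬ (G.deleteEdges {s((0 : Fin 4), 1)}).Adj 0 v := by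
      intro v h
      rw [hA'] at h
      obtain ⟨hG', hne⟩ := h
      rw [hA] at hG'
      rcases hG' with ⟨-, rfl⟩ | ⟨h, -⟩ | ⟨h, -⟩ | ⟨h, -⟩ | ⟨h, -⟩ | ⟨h, -⟩
      · exact hne rfl
      all_goals exact absurd h (by decide)
    have hC : ∀ ⦃u v : Fin 4⦄, u ∈ ({0} : Set (Fin 4)) → (G.deleteEdges {s((0:Fin 4),1)}).Adj u v → v ∈ ({0} : Set (Fin 4)) := by
      intro u v hu hadj
      simp only [Set.mem_singleton_iff] at hu
      subst hu
      exact absurd hadj (hiso v)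
    obtain ⟨w⟩ := hconn.preconnected 0 1
    have := walk_mem' hC w rfl
    simp at this
  · -- deleting edge (1,2): components {0,1} and {2,3}
    have hC : ∀ ⦃u v : Fin 4⦄, u ∈ ({0, 1} : Set (Fin 4)) → (G.deleteEdges {s((1:Fin 4),2)}).Adj u v → v ∈ ({0, 1} : Set (Fin 4)) := by
      intro u v hu hadj
      rw [hA'] at hadj
      obtain ⟨hG', hne⟩ := hadj
      rw [hA] at hG'
      simp only [Set.mem_insert_iff, Set.mem_singleton_iff] at hu ⊢
      rcases hG' with ⟨rfl, rfl⟩ | ⟨rfl, rfl⟩ | ⟨rfl, rfl⟩ | ⟨rfl, rfl⟩ | ⟨rfl, rfl⟩ | ⟨rfl, rfl⟩ <;>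
        simp_all <;> exact hne rfl
    obtain ⟨w⟩ := hconn.preconnected 0 2
    have := walk_mem' hC w (by simp)
    simp at this
  · -- deleting edge (2,3): vertex 3 is isolated
    have hiso : ∀ v : Fin 4, ¬ (G.deleteEdges {s((2 : Fin 4), 3)}).Adj 3 v := by
      intro v h
      rw [hA'] at h
      obtain ⟨hG', hne⟩ := h
      rw [hA] at hG'
      rcases hG' with ⟨h, -⟩ | ⟨h, -⟩ | ⟨h, -⟩ | ⟨h, -⟩ | ⟨h, -⟩ | ⟨-, rfl⟩
      · exact absurd h (by decide)
      · exact absurd h (by decide)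
      · exact absurd h (by decide)
      · exact absurd h (by decide)
      · exact absurd h (by decide)
      · exact hne Sym2.eq_swap
    have hC : ∀ ⦃u v : Fin 4⦄, u ∈ ({3} : Set (Fin 4)) → (G.deleteEdges {s((2:Fin 4),3)}).Adj u v → v ∈ ({3} : Set (Fin 4)) := by
      intro u v hu hadj
      simp only [Set.mem_singleton_iff] at hu
      subst hu
      exact absurd hadj (hiso v)
    obtain ⟨w⟩ := hconn.preconnected 3 0
    have := walk_mem' hC w rfl
    simp at this
end

section
/- The balance-gain function is not submodular: there exist a signed graph H = ((V,E), σ), edge sets S ⊆ T ⊆ E, and an edge e ∈ E \ T such that f(S ∪ {e}) − f(S) < f(T ∪ {e}) − f(T), where f(B) = Δ(H_B) − Δ(H). -/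
open Matrix Finset

attribute [local instance 10] Classical.propDecidable

variable {V : Type*}

/-- The balance-gain function `f(B) = Δ(H_B) − Δ(H)` (valued in `ℤ`). -/
noncomputable def balanceGain [Fintype V] (G : SimpleGraph V) (σ : V → V → ℝ)
    (B : Finset (Sym2 V)) : ℤ :=
  (currentBalance (G.deleteEdges ↑B) σ : ℤ) - (currentBalance G σ : ℤ)

/-!
Take the diamond `K₄ - {1, 3}` with every edge negative; then a vertex set induces a balanced
subgraph iff it induces a bipartite one. The induced path `1 - 0 - 3` gives `Δ(H) ≥ 3`. Deleting
`e = 01` or `T = {23}` alone leaves a triangle, so `Δ` stays below `4`, but deleting both leaves the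
path `1 - 2 - 0 - 3`, whence `Δ(H_{T ∪ e}) = 4`. Thus `f(e) - f(∅) ≤ 0 < 1 ≤ f(T ∪ e) - f(T)`.
-/

open SimpleGraph

section CurrentBalance

variable [Fintype V] {G : SimpleGraph V} {σ : V → V → ℝ}

lemma ncard_le_currentBalance {W : Set V} (hc : (G.induce W).Connected)
    (hb : IsBalancedOn G σ W) : W.ncard ≤ currentBalance G σ := by
  refine le_csSup ⟨Nat.card V, ?_⟩ ⟨W, rfl, hc, hb⟩
  rintro k ⟨W', rfl, -, -⟩
  exact Set.ncard_le_card W'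

lemma SimpleGraph.Walk.IsPath.length_lt_currentBalance {u v : V} {p : G.Walk u v}
    (hp : p.IsPath) (hb : IsBalancedOn G σ {x | x ∈ p.support}) :
    p.length < currentBalance G σ := by
  have hcard : {x | x ∈ p.support}.ncard = p.length + 1 := by
    rw [← List.coe_toFinset, Set.ncard_coe_finset, List.toFinset_card_of_nodup hp.support_nodup,
      p.length_support]
  have := ncard_le_currentBalance p.connected_induce_support hb
  omega

lemma currentBalance_lt_card (h : ¬ IsBalancedOn G σ Set.univ) :
    currentBalance G σ < Fintype.card V := by
  have hV : 0 < Fintype.card V := Fintype.card_pos_iff.2 <| by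
    by_contra hV
    exact h ⟨∅, fun i => (not_nonempty_iff.mp hV).elim i⟩
  have hle : currentBalance G σ ≤ Fintype.card V - 1 := by
    refine csSup_le' ?_
    rintro k ⟨W, rfl, -, hb⟩
    have hW : W ≠ Set.univ := by rintro rfl; exact h hb
    have := Set.ncard_lt_card hW
    rw [Nat.card_eq_fintype_card] at this
    omega
  omega

end CurrentBalance

section AllNegative

variable {G : SimpleGraph V} {W : Set V}

lemma isBalancedOn_neg_one_iff :
    IsBalancedOn G (fun _ _ => -1) W ↔
      ∃ S : Set V, ∀ i ∈ W, ∀ j ∈ W, G.Adj i j → ¬(i ∈ S ↔ j ∈ S) := by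
  have : ((-1 : ℝ) = 1) ↔ False := by norm_num
  simp only [IsBalancedOn, this, false_iff]

lemma not_isBalancedOn_neg_one_of_triangle {a b c : V} (hab : G.Adj a b) (hbc : G.Adj b c)
    (hac : G.Adj a c) (ha : a ∈ W) (hb : b ∈ W) (hc : c ∈ W) :
    ¬ IsBalancedOn G (fun _ _ => -1) W := by
  rw [isBalancedOn_neg_one_iff]
  rintro ⟨S, hS⟩
  have := hS a ha b hb hab
  have := hS b hb c hc hbc
  have := hS a ha c hc hac
  tauto

end AllNegative

def diamond : SimpleGraph (Fin 4) := (⊤ : SimpleGraph (Fin 4)).deleteEdges {s(1, 3)}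

instance : DecidableRel diamond.Adj := fun i j =>
  decidable_of_iff (i ≠ j ∧ s(i, j) ≠ s(1, 3)) (by simp [diamond])

lemma three_le_currentBalance_diamond : 3 ≤ currentBalance diamond (fun _ _ => -1) := by
  let p : diamond.Walk 1 3 := .cons (v := 0) (by decide) <| .cons (by decide) .nil
  exact (p.isPath_def.2 (by decide)).length_lt_currentBalance
    (isBalancedOn_neg_one_iff.2 ⟨{0}, by decide⟩)

lemma currentBalance_diamond_deleteEdges_lt_four_of_triangle {X : Finset (Sym2 (Fin 4))}
    {a b c : Fin 4} (hab : (diamond.deleteEdges X).Adj a b) (hbc : (diamond.deleteEdges X).Adj b c)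
    (hac : (diamond.deleteEdges X).Adj a c) :
    currentBalance (diamond.deleteEdges X) (fun _ _ => -1) < 4 :=
  currentBalance_lt_card <| not_isBalancedOn_neg_one_of_triangle hab hbc hac trivial trivial trivial

lemma four_le_currentBalance_diamond_deleteEdges :
    4 ≤ currentBalance (diamond.deleteEdges ↑({s(2, 3)} ∪ {s(0, 1)} : Finset (Sym2 (Fin 4))))
      (fun _ _ => -1) := by
  let p : (diamond.deleteEdges ↑({s(2, 3)} ∪ {s(0, 1)} : Finset (Sym2 (Fin 4)))).Walk 1 3 :=
    .cons (v := 2) (by decide) <| .cons (v := 0) (by decide) <| .cons (by decide) .nil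
  exact (p.isPath_def.2 (by decide)).length_lt_currentBalance
    (isBalancedOn_neg_one_iff.2 ⟨{0, 1}, by decide⟩)

/-- The balance-gain function is not submodular: there exist a signed
graph `H`, edge sets `S ⊆ T ⊆ E` and an edge `e ∈ E \ T` with
`f(S ∪ {e}) − f(S) < f(T ∪ {e}) − f(T)`. -/
theorem balanceGain_not_submodular :
    ∃ (n : ℕ) (G : SimpleGraph (Fin n)) (σ : Fin n → Fin n → ℝ),
      (∀ a b, σ a b = σ b a) ∧ (∀ a b, σ a b = 1 ∨ σ a b = -1) ∧
      ∃ (S T : Finset (Sym2 (Fin n))) (e : Sym2 (Fin n)),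
        S ⊆ T ∧ ↑T ⊆ G.edgeSet ∧ e ∈ G.edgeSet ∧ e ∉ T ∧
        balanceGain G σ (S ∪ {e}) - balanceGain G σ S <
          balanceGain G σ (T ∪ {e}) - balanceGain G σ T := by
  refine ⟨4, diamond, fun _ _ => -1, fun _ _ => rfl, fun _ _ => Or.inr rfl, ∅, {s(2, 3)}, s(0, 1),
    Finset.empty_subset _, by simp [diamond], by simp [diamond], by decide, ?_⟩
  have hH := three_le_currentBalance_diamond
  have hHe := currentBalance_diamond_deleteEdges_lt_four_of_triangle (a := 0) (b := 2) (c := 3)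
    (X := {s(0, 1)}) (by decide) (by decide) (by decide)
  have hHT := currentBalance_diamond_deleteEdges_lt_four_of_triangle (a := 0) (b := 1) (c := 2)
    (X := {s(2, 3)}) (by decide) (by decide) (by decide)
  have hHTe := four_le_currentBalance_diamond_deleteEdges
  simp only [balanceGain, Finset.empty_union, Finset.coe_empty, deleteEdges_empty]
  omega
end

section
/- The balance-gain function is not proportionally submodular: there exist a signed graph H = ((V,E), σ) and edge sets S, T ⊆ E such that |T|·f(S) + |S|·f(T) < |S ∩ T|·f(S ∪ T) + |S ∪ T|·f(S ∩ T), where f(B) = Δ(H_B) − Δ(H). -/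
open Matrix Finset

attribute [local instance 10] Classical.propDecidable

variable {V : Type*}

section Aux

variable {V : Type*}

lemma conn_hub (G : SimpleGraph V) (hub : V) (h : ∀ u, u = hub ∨ G.Adj u hub) :
    G.Connected := by
  haveI : Nonempty V := ⟨hub⟩
  refine ⟨fun u v => ?_⟩
  have hu : G.Reachable u hub :=
    (h u).elim (fun e => e ▸ SimpleGraph.Reachable.refl _) (fun a => a.reachable)
  have hv : G.Reachable v hub :=
    (h v).elim (fun e => e ▸ SimpleGraph.Reachable.refl _) (fun a => a.reachable)
  exact hu.trans hv.symm

lemma eq_of_isolated {G : SimpleGraph V} {u v : V} (h : ∀ w, ¬ G.Adj u w)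
    (hr : G.Reachable u v) : u = v := by
  obtain ⟨p⟩ := hr
  cases p with
  | nil => rfl
  | cons h' _ => exact absurd h' (h _)

lemma currentBalance_eq [Fintype V] (G : SimpleGraph V) (σ : V → V → ℝ) (k : ℕ)
    (hmem : ∃ W : Set V, W.ncard = k ∧ (G.induce W).Connected ∧ IsBalancedOn G σ W)
    (hub : ∀ m, (∃ W : Set V, W.ncard = m ∧ (G.induce W).Connected ∧ IsBalancedOn G σ W) → m ≤ k) :
    currentBalance G σ = k := by
  unfold currentBalance
  exact le_antisymm (csSup_le ⟨k, hmem⟩ hub) (le_csSup ⟨k, fun m hm => hub m hm⟩ hmem)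

end Aux

section Counterexample

/-- The sign function: edge {0,1} is negative, all others positive. -/
noncomputable def sig3 : Fin 3 → Fin 3 → ℝ := fun i j =>
  if (i = 0 ∧ j = 1) ∨ (i = 1 ∧ j = 0) then -1 else 1

lemma sig3_neg {i j : Fin 3} (h : (i = 0 ∧ j = 1) ∨ (i = 1 ∧ j = 0)) : sig3 i j = -1 :=
  if_pos h

lemma sig3_pos {i j : Fin 3} (h : ¬((i = 0 ∧ j = 1) ∨ (i = 1 ∧ j = 0))) : sig3 i j = 1 :=
  if_neg h

def Sfin : Finset (Sym2 (Fin 3)) := {s(0,1), s(1,2)}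
def Tfin : Finset (Sym2 (Fin 3)) := {s(0,1), s(0,2)}

abbrev G3 : SimpleGraph (Fin 3) := ⊤

lemma ncard_univ_le {W : Set (Fin 3)} : W.ncard ≤ 3 := by
  have := Set.ncard_le_ncard (Set.subset_univ W) Set.finite_univ
  simpa [Set.ncard_univ] using this

lemma eq_univ_of_ncard {W : Set (Fin 3)} (h : 2 < W.ncard) : W = Set.univ := by
  apply Set.eq_of_subset_of_ncard_le (Set.subset_univ W) _ Set.finite_univ
  simp only [Set.ncard_univ, Nat.card_eq_fintype_card, Fintype.card_fin]
  have := @ncard_univ_le W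
  omega

lemma cB_full : currentBalance G3 sig3 = 2 := by
  apply currentBalance_eq
  · refine ⟨{0, 1}, Set.ncard_pair (by decide), ?_, ?_⟩
    · refine conn_hub _ ⟨1, by simp⟩ ?_
      rintro ⟨x, hx⟩
      simp only [Set.mem_insert_iff, Set.mem_singleton_iff] at hx
      rcases hx with rfl | rfl
      · exact Or.inr (by decide : (0 : Fin 3) ≠ 1)
      · exact Or.inl rfl
    · refine ⟨{0}, ?_⟩
      intro i hi j hj hadj
      simp only [Set.mem_insert_iff, Set.mem_singleton_iff] at hi hj
      rcases hi with rfl | rfl <;> rcases hj with rfl | rfl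
      · exact absurd rfl hadj
      · norm_num [sig3_neg (by decide : ((0:Fin 3) = 0 ∧ (1:Fin 3) = 1) ∨ _),
          Set.mem_singleton_iff]
      · norm_num [sig3_neg (Or.inr ⟨rfl, rfl⟩ :
          ((1:Fin 3) = 0 ∧ (0:Fin 3) = 1) ∨ ((1:Fin 3) = 1 ∧ (0:Fin 3) = 0)),
          Set.mem_singleton_iff]
      · exact absurd rfl hadj
  · rintro m ⟨W, rfl, hc, hb⟩
    by_contra hm
    push_neg at hm
    have hWu : W = Set.univ := eq_univ_of_ncard hm
    subst hWu
    obtain ⟨S', hS⟩ := hb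
    have h01 := hS 0 (Set.mem_univ _) 1 (Set.mem_univ _) (by decide : (0:Fin 3) ≠ 1)
    have h12 := hS 1 (Set.mem_univ _) 2 (Set.mem_univ _) (by decide : (1:Fin 3) ≠ 2)
    have h02 := hS 0 (Set.mem_univ _) 2 (Set.mem_univ _) (by decide : (0:Fin 3) ≠ 2)
    rw [sig3_neg (by exact Or.inl ⟨rfl, rfl⟩)] at h01
    rw [sig3_pos (by decide)] at h12
    rw [sig3_pos (by decide)] at h02
    norm_num at h01 h12 h02
    tauto

lemma cB_le3 (G : SimpleGraph (Fin 3)) (σ : Fin 3 → Fin 3 → ℝ) :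
    ∀ m, (∃ W : Set (Fin 3), W.ncard = m ∧ (G.induce W).Connected ∧ IsBalancedOn G σ W) →
      m ≤ 3 := by
  rintro m ⟨W, rfl, -, -⟩
  exact ncard_univ_le

lemma cB_inter : currentBalance (G3.deleteEdges ↑(Sfin ∩ Tfin)) sig3 = 3 := by
  have hST : Sfin ∩ Tfin = {s(0,1)} := by decide
  rw [hST]
  have a02 : (G3.deleteEdges ↑({s(0,1)} : Finset (Sym2 (Fin 3)))).Adj 0 2 :=
    (SimpleGraph.deleteEdges_adj).mpr
      ⟨(by decide : (0:Fin 3) ≠ 2), fun h => absurd (Finset.mem_coe.mp h) (by decide)⟩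
  have a12 : (G3.deleteEdges ↑({s(0,1)} : Finset (Sym2 (Fin 3)))).Adj 1 2 :=
    (SimpleGraph.deleteEdges_adj).mpr
      ⟨(by decide : (1:Fin 3) ≠ 2), fun h => absurd (Finset.mem_coe.mp h) (by decide)⟩
  apply currentBalance_eq
  · refine ⟨Set.univ, by simp [Set.ncard_univ], ?_, ?_⟩
    · refine conn_hub _ ⟨2, Set.mem_univ _⟩ ?_
      rintro ⟨x, -⟩
      fin_cases x
      · exact Or.inr a02
      · exact Or.inr a12
      · exact Or.inl rfl
    · refine ⟨Set.univ, ?_⟩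
      intro i _ j _ hadj
      rw [SimpleGraph.deleteEdges_adj] at hadj
      obtain ⟨hne, hmem⟩ := hadj
      fin_cases i <;> fin_cases j <;>
        first
          | exact absurd rfl hne
          | exact absurd (Finset.mem_coe.mpr (by decide)) hmem
          | exact iff_of_true (sig3_pos (by decide)) (by simp)
  · exact cB_le3 _ _

lemma cB_S : currentBalance (G3.deleteEdges ↑Sfin) sig3 = 2 := by
  have a02 : (G3.deleteEdges ↑Sfin).Adj 0 2 :=
    (SimpleGraph.deleteEdges_adj).mpr
      ⟨(by decide : (0:Fin 3) ≠ 2), fun h => absurd (Finset.mem_coe.mp h) (by decide)⟩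
  apply currentBalance_eq
  · refine ⟨{0, 2}, Set.ncard_pair (by decide), ?_, ?_⟩
    · refine conn_hub _ ⟨2, by simp⟩ ?_
      rintro ⟨x, hx⟩
      simp only [Set.mem_insert_iff, Set.mem_singleton_iff] at hx
      rcases hx with rfl | rfl
      · exact Or.inr a02
      · exact Or.inl rfl
    · refine ⟨Set.univ, ?_⟩
      intro i hi j hj hadj
      rw [SimpleGraph.deleteEdges_adj] at hadj
      obtain ⟨hne, hmem⟩ := hadj
      simp only [Set.mem_insert_iff, Set.mem_singleton_iff] at hi hj
      rcases hi with rfl | rfl <;> rcases hj with rfl | rfl <;>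
        first
          | exact absurd rfl hne
          | exact absurd (Finset.mem_coe.mpr (by decide)) hmem
          | exact iff_of_true (sig3_pos (by decide)) (by simp)
  · rintro m ⟨W, rfl, hc, -⟩
    by_contra hm
    push_neg at hm
    have hWu : W = Set.univ := eq_univ_of_ncard hm
    subst hWu
    have hiso0 : ∀ x : Fin 3, ¬ (G3.deleteEdges ↑Sfin).Adj 1 x := by
      intro x hadj'
      rw [SimpleGraph.deleteEdges_adj] at hadj'
      fin_cases x
      · exact hadj'.2 (Finset.mem_coe.mpr (by decide))
      · exact absurd rfl hadj'.1
      · exact hadj'.2 (Finset.mem_coe.mpr (by decide))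
    have hiso : ∀ w : (Set.univ : Set (Fin 3)),
        ¬ ((G3.deleteEdges ↑Sfin).induce Set.univ).Adj ⟨1, Set.mem_univ _⟩ w :=
      fun w hadj => hiso0 w.1 hadj
    have := eq_of_isolated hiso
      (hc.preconnected ⟨1, Set.mem_univ _⟩ ⟨0, Set.mem_univ _⟩)
    exact absurd (congrArg Subtype.val this) (by decide)

lemma cB_T : currentBalance (G3.deleteEdges ↑Tfin) sig3 = 2 := by
  have a12 : (G3.deleteEdges ↑Tfin).Adj 1 2 :=
    (SimpleGraph.deleteEdges_adj).mpr
      ⟨(by decide : (1:Fin 3) ≠ 2), fun h => absurd (Finset.mem_coe.mp h) (by decide)⟩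
  apply currentBalance_eq
  · refine ⟨{1, 2}, Set.ncard_pair (by decide), ?_, ?_⟩
    · refine conn_hub _ ⟨2, by simp⟩ ?_
      rintro ⟨x, hx⟩
      simp only [Set.mem_insert_iff, Set.mem_singleton_iff] at hx
      rcases hx with rfl | rfl
      · exact Or.inr a12
      · exact Or.inl rfl
    · refine ⟨Set.univ, ?_⟩
      intro i hi j hj hadj
      rw [SimpleGraph.deleteEdges_adj] at hadj
      obtain ⟨hne, hmem⟩ := hadj
      simp only [Set.mem_insert_iff, Set.mem_singleton_iff] at hi hj
      rcases hi with rfl | rfl <;> rcases hj with rfl | rfl <;>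
        first
          | exact absurd rfl hne
          | exact absurd (Finset.mem_coe.mpr (by decide)) hmem
          | exact iff_of_true (sig3_pos (by decide)) (by simp)
  · rintro m ⟨W, rfl, hc, -⟩
    by_contra hm
    push_neg at hm
    have hWu : W = Set.univ := eq_univ_of_ncard hm
    subst hWu
    have hiso0 : ∀ x : Fin 3, ¬ (G3.deleteEdges ↑Tfin).Adj 0 x := by
      intro x hadj'
      rw [SimpleGraph.deleteEdges_adj] at hadj'
      fin_cases x
      · exact absurd rfl hadj'.1
      · exact hadj'.2 (Finset.mem_coe.mpr (by decide))
      · exact hadj'.2 (Finset.mem_coe.mpr (by decide))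
    have hiso : ∀ w : (Set.univ : Set (Fin 3)),
        ¬ ((G3.deleteEdges ↑Tfin).induce Set.univ).Adj ⟨0, Set.mem_univ _⟩ w :=
      fun w hadj => hiso0 w.1 hadj
    have := eq_of_isolated hiso
      (hc.preconnected ⟨0, Set.mem_univ _⟩ ⟨1, Set.mem_univ _⟩)
    exact absurd (congrArg Subtype.val this) (by decide)

lemma cB_union : currentBalance (G3.deleteEdges ↑(Sfin ∪ Tfin)) sig3 = 1 := by
  apply currentBalance_eq
  · refine ⟨{0}, Set.ncard_singleton _, ?_, ?_⟩
    · refine conn_hub _ ⟨0, rfl⟩ ?_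
      rintro ⟨x, hx⟩
      exact Or.inl (Subtype.ext hx)
    · refine ⟨∅, ?_⟩
      intro i hi j hj hadj
      simp only [Set.mem_singleton_iff] at hi hj
      subst hi; subst hj
      exact absurd hadj (SimpleGraph.irrefl _)
  · rintro m ⟨W, rfl, hc, -⟩
    by_contra hm
    push_neg at hm
    have h2 : 1 < W.ncard := hm
    rw [Set.one_lt_ncard (Set.toFinite W)] at h2
    obtain ⟨a, ha, b, hb, hab⟩ := h2
    have hiso0 : ∀ u x : Fin 3, ¬ (G3.deleteEdges ↑(Sfin ∪ Tfin)).Adj u x := by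
      intro u x hadj'
      rw [SimpleGraph.deleteEdges_adj] at hadj'
      fin_cases u <;> fin_cases x <;>
        first
          | exact absurd rfl hadj'.1
          | exact hadj'.2 (Finset.mem_coe.mpr (by decide))
    have hiso : ∀ w : W, ¬ ((G3.deleteEdges ↑(Sfin ∪ Tfin)).induce W).Adj ⟨a, ha⟩ w :=
      fun w hadj => hiso0 a w.1 hadj
    have := eq_of_isolated hiso (hc.preconnected ⟨a, ha⟩ ⟨b, hb⟩)
    exact hab (congrArg Subtype.val this)

end Counterexample

/-- The balance-gain function is not proportionally submodular:
there exist a signed graph `H` and edge sets `S, T ⊆ E` with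
`|T|·f(S) + |S|·f(T) < |S ∩ T|·f(S ∪ T) + |S ∪ T|·f(S ∩ T)`. -/
theorem balanceGain_not_proportionally_submodular :
    ∃ (n : ℕ) (G : SimpleGraph (Fin n)) (σ : Fin n → Fin n → ℝ),
      (∀ a b, σ a b = σ b a) ∧ (∀ a b, σ a b = 1 ∨ σ a b = -1) ∧
      ∃ (S T : Finset (Sym2 (Fin n))),
        ↑S ⊆ G.edgeSet ∧ ↑T ⊆ G.edgeSet ∧
        (T.card : ℤ) * balanceGain G σ S + (S.card : ℤ) * balanceGain G σ T <
          ((S ∩ T).card : ℤ) * balanceGain G σ (S ∪ T) +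
            ((S ∪ T).card : ℤ) * balanceGain G σ (S ∩ T) := by
  refine ⟨3, G3, sig3, ?_, ?_, Sfin, Tfin, ?_, ?_, ?_⟩
  · intro a b
    unfold sig3
    by_cases h : (a = 0 ∧ b = 1) ∨ (a = 1 ∧ b = 0) <;>
      [rw [if_pos h, if_pos (by tauto)]; rw [if_neg h, if_neg (by tauto)]]
  · intro a b
    by_cases h : (a = 0 ∧ b = 1) ∨ (a = 1 ∧ b = 0)
    · exact Or.inr (sig3_neg h)
    · exact Or.inl (sig3_pos h)
  · intro e he
    have he' : e ∈ Sfin := Finset.mem_coe.mp he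
    fin_cases he' <;> simp
  · intro e he
    have he' : e ∈ Tfin := Finset.mem_coe.mp he
    fin_cases he' <;> simp
  · have hS : Sfin.card = 2 := by decide
    have hT : Tfin.card = 2 := by decide
    have hI : (Sfin ∩ Tfin).card = 1 := by decide
    have hU : (Sfin ∪ Tfin).card = 3 := by decide
    unfold balanceGain
    rw [hS, hT, hI, hU, cB_full, cB_S, cB_T, cB_inter, cB_union]
    norm_num
end

section
/- Let U be a finite set, k ≥ 1, and f : 2^U → ℝ a nonnegative monotone set function with f(∅) = 0 (f(A) ≤ f(B) whenever A ⊆ B). Let S₀ = ∅ and, for 0 ≤ i < k, let S_{i+1} = S_i ∪ {x_i} where x_i ∈ U maximizes f(S_i ∪ {x}) over x ∈ U. Let OPT ⊆ U with |OPT| ≤ k, and suppose there is γ ∈ (0,1] such that for every 0 ≤ i < k, Σ_{x ∈ OPT} [f(S_i ∪ {x}) − f(S_i)] ≥ γ·[f(S_i ∪ OPT) − f(S_i)]. Then f(S_k) ≥ (1 − e^{−γ})·f(OPT). -/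
/-!
Let `d i = f OPT - f (S i)` be the gap to the optimum. Monotonicity gives
`f OPT ≤ f (S i ∪ OPT)`, and the greedy choice bounds each of the at most `k` marginal gains over
`OPT` by the greedy gain, so the pseudo-submodularity hypothesis makes the greedy step close at
least the fraction `γ / k` of the gap. Since the gap never grows, this gives
`d (i + 1) ≤ exp (-γ / k) * d i` whatever the sign of `d i`, and after `k` steps the gap is at
most `exp (-γ) * f OPT`.
-/

open Matrix Finset

attribute [local instance 10] Classical.propDecidable

variable {V : Type*}

open Real

theorem le_exp_neg_mul_of_mul_le_sub {d d' ε : ℝ} (hε : 0 ≤ ε) (hle : d' ≤ d)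
    (hshrink : ε * d ≤ d - d') : d' ≤ exp (-ε) * d := by
  rcases le_or_gt 0 d with hd | hd
  · calc d' ≤ (-ε + 1) * d := by linarith
      _ ≤ exp (-ε) * d := mul_le_mul_of_nonneg_right (add_one_le_exp _) hd
  · calc d' ≤ d := hle
      _ ≤ exp (-ε) * d := le_mul_of_le_one_left hd.le (exp_le_one_iff.mpr (by linarith))

section Greedy

variable {U : Type*} [DecidableEq U] {f : Finset U → ℝ} {s T : Finset U} {x : U} {k : ℕ}

theorem sum_marginal_le_mul_greedy_marginal (hf : Monotone f)
    (hx : ∀ y, f (insert y s) ≤ f (insert x s)) (hT : T.card ≤ k) :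
    ∑ y ∈ T, (f (insert y s) - f s) ≤ k * (f (insert x s) - f s) := by
  have hgain : 0 ≤ f (insert x s) - f s := sub_nonneg.mpr (hf (subset_insert x s))
  calc ∑ y ∈ T, (f (insert y s) - f s) ≤ T.card • (f (insert x s) - f s) :=
        sum_le_card_nsmul _ _ _ fun y _ => sub_le_sub_right (hx y) _
    _ ≤ k * (f (insert x s) - f s) := by
        rw [nsmul_eq_mul]; gcongr

theorem div_mul_gap_le_greedy_marginal {γ : ℝ} (hf : Monotone f)
    (hx : ∀ y, f (insert y s) ≤ f (insert x s)) (hT : T.card ≤ k) (hk : 0 < k) (hγ : 0 ≤ γ)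
    (hps : γ * (f (s ∪ T) - f s) ≤ ∑ y ∈ T, (f (insert y s) - f s)) :
    γ / k * (f T - f s) ≤ f (insert x s) - f s := by
  have hkpos : (0 : ℝ) < k := Nat.cast_pos.mpr hk
  rw [div_mul_eq_mul_div, div_le_iff₀' hkpos]
  calc γ * (f T - f s) ≤ γ * (f (s ∪ T) - f s) := by
        gcongr; exact hf subset_union_right
    _ ≤ ∑ y ∈ T, (f (insert y s) - f s) := hps
    _ ≤ k * (f (insert x s) - f s) := sum_marginal_le_mul_greedy_marginal hf hx hT

end Greedy

theorem greedy_pseudo_submodular_approximation_general {U : Type*} [DecidableEq U]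
    (f : Finset U → ℝ) (k : ℕ) (hk : 1 ≤ k)
    (hempty : f ∅ = 0)
    (hmono : ∀ A B : Finset U, A ⊆ B → f A ≤ f B)
    (S : ℕ → Finset U) (hS0 : S 0 = ∅)
    (hstep : ∀ i < k, ∃ x : U, S (i + 1) = insert x (S i) ∧
      ∀ y : U, f (insert y (S i)) ≤ f (insert x (S i)))
    (OPT : Finset U) (hOPT : OPT.card ≤ k)
    (γ : ℝ) (hγ0 : 0 < γ)
    (hps : ∀ i < k,
      ∑ x ∈ OPT, (f (insert x (S i)) - f (S i)) ≥ γ * (f (S i ∪ OPT) - f (S i))) :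
    f (S k) ≥ (1 - Real.exp (-γ)) * f OPT := by
  have hf : Monotone f := fun A B h => hmono A B h
  have hε : 0 ≤ γ / k := by positivity
  have hgap : ∀ i < k, f OPT - f (S (i + 1)) ≤ exp (-(γ / k)) * (f OPT - f (S i)) := by
    intro i hi
    obtain ⟨x, hSx, hx⟩ := hstep i hi
    rw [hSx]
    have hgain := div_mul_gap_le_greedy_marginal hf hx hOPT hk hγ0.le (hps i hi)
    have hgrow : f (S i) ≤ f (insert x (S i)) := hf (subset_insert x (S i))
    exact le_exp_neg_mul_of_mul_le_sub hε (by linarith) (by linarith)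
  have hfinal := le_geom (u := fun i => f OPT - f (S i)) (exp_nonneg _) k hgap
  have hexp : exp (-(γ / k)) ^ k = exp (-γ) := by
    rw [← exp_nat_mul]; field_simp
  simp only [hS0, hempty, sub_zero, hexp] at hfinal
  linarith

/-- Greedy approximation guarantee for a nonnegative monotone set
function satisfying a local pseudo-submodularity condition with ratio `γ` along the
greedy trajectory: `f(S_k) ≥ (1 − e^{−γ})·f(OPT)`. -/
theorem greedy_pseudo_submodular_approximation {U : Type*} [Fintype U] [DecidableEq U]
    (f : Finset U → ℝ) (k : ℕ) (hk : 1 ≤ k)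
    (hnonneg : ∀ A : Finset U, 0 ≤ f A) (hempty : f ∅ = 0)
    (hmono : ∀ A B : Finset U, A ⊆ B → f A ≤ f B)
    (S : ℕ → Finset U) (hS0 : S 0 = ∅)
    (hstep : ∀ i < k, ∃ x : U, S (i + 1) = insert x (S i) ∧
      ∀ y : U, f (insert y (S i)) ≤ f (insert x (S i)))
    (OPT : Finset U) (hOPT : OPT.card ≤ k)
    (γ : ℝ) (hγ0 : 0 < γ) (hγ1 : γ ≤ 1)
    (hps : ∀ i < k,
      ∑ x ∈ OPT, (f (insert x (S i)) - f (S i)) ≥ γ * (f (S i ∪ OPT) - f (S i))) :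
    f (S k) ≥ (1 - Real.exp (-γ)) * f OPT :=
  greedy_pseudo_submodular_approximation_general f k hk hempty hmono S hS0 hstep OPT hOPT γ hγ0 hps
end
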